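/- Let $\gamma > 0$, $\alpha > 0$, and define $\rho_\infty(c) = \big(\frac{\gamma}{\gamma+\alpha}\big)^c \frac{\alpha(\alpha+1)\cdots(\alpha+c-1)}{c!} \big(\frac{\alpha}{\alpha+\gamma}\big)^\alpha$ for integers $c \ge 0$ (with the empty product equal to $1$ for $c=0$). Then $\rho_\infty$ satisfies the stationary recursion $(c+1)\rho_\infty(c+1) = \frac{1}{\gamma+\alpha}\big[(c(2\gamma+\alpha)+\gamma\alpha)\rho_\infty(c) - \gamma(c-1+\alpha)\rho_\infty(c-1)\big]$ for all $c \ge 1$, and $\rho_\infty(1) = \frac{\gamma\alpha}{\gamma+\alpha}\rho_\infty(0)$. -/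

import Mathlib

/-!
The distribution satisfies the first-order recursion
`(c + 1) ρ(c + 1) = γ/(γ + α) · (α + c) ρ(c)`, i.e. it is a negative binomial law.
The case `c = 0` is the boundary condition, and the stationary second-order recursion follows
by using the first-order one at `c` and at `c - 1`: writing `γ = (γ + α) · γ/(γ + α)`, the term
`γ (c - 1 + α) ρ(c - 1)` becomes `(γ + α) c ρ(c)`.
-/

open Finset

theorem succ_mul_geom_mul_pochhammer_div_factorial {𝕜 : Type*} [Field 𝕜] [CharZero 𝕜]
    (r a K : 𝕜) (c : ℕ) :
    ((c : 𝕜) + 1) * (r ^ (c + 1) * ((∏ i ∈ range (c + 1), (a + i)) / (c + 1).factorial) * K) =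
      r * (a + c) * (r ^ c * ((∏ i ∈ range c, (a + i)) / c.factorial) * K) := by
  have hc : (c : 𝕜) + 1 ≠ 0 := by exact_mod_cast c.succ_ne_zero
  have hfact : (c.factorial : 𝕜) ≠ 0 := by exact_mod_cast c.factorial_ne_zero
  rw [prod_range_succ, Nat.factorial_succ, Nat.cast_mul, Nat.cast_succ]
  field_simp
  ring

theorem stationary_recursion_of_succ_mul_eq {𝕜 : Type*} [Field 𝕜] (γ α : 𝕜) (hγα : γ + α ≠ 0)
    (ρ : ℕ → 𝕜) (hρ : ∀ c : ℕ, ((c : 𝕜) + 1) * ρ (c + 1) = γ / (γ + α) * (α + c) * ρ c)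
    (c : ℕ) (hc : 1 ≤ c) :
    ((c : 𝕜) + 1) * ρ (c + 1) = (1 / (γ + α)) *
      (((c : 𝕜) * (2 * γ + α) + γ * α) * ρ c - γ * ((c : 𝕜) - 1 + α) * ρ (c - 1)) := by
  obtain ⟨k, rfl⟩ := Nat.exists_eq_add_of_le' hc
  have hprev := hρ k
  have hcur := hρ (k + 1)
  push_cast at hprev hcur ⊢
  rw [hcur]
  field_simp at hprev ⊢
  linear_combination -hprev

theorem stmt_11 (γ α : ℝ) (hγ : 0 < γ) (hα : 0 < α)
    (ρ : ℕ → ℝ)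
    (hρ : ∀ c : ℕ, ρ c = (γ / (γ + α)) ^ c *
      ((∏ i ∈ Finset.range c, (α + i)) / (Nat.factorial c)) *
      (α / (α + γ)) ^ (α : ℝ)) :
    (∀ c : ℕ, 1 ≤ c →
      ((c : ℝ) + 1) * ρ (c + 1) = (1 / (γ + α)) *
        (((c : ℝ) * (2 * γ + α) + γ * α) * ρ c
          - γ * ((c : ℝ) - 1 + α) * ρ (c - 1))) ∧
    ρ 1 = (γ * α / (γ + α)) * ρ 0 := by
  have hγα : γ + α ≠ 0 := by positivity
  have hstep : ∀ c : ℕ, ((c : ℝ) + 1) * ρ (c + 1) = γ / (γ + α) * (α + c) * ρ c := fun c => by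
    rw [hρ, hρ]
    exact succ_mul_geom_mul_pochhammer_div_factorial _ _ _ c
  refine ⟨stationary_recursion_of_succ_mul_eq γ α hγα ρ hstep, ?_⟩
  have h0 := hstep 0
  rw [Nat.cast_zero, zero_add, one_mul, add_zero] at h0
  rw [h0, mul_div_right_comm]
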